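/- arXiv:2208.00523 — 2 statements merged into one kernel-verified Lean document; each statement's English description precedes it below -/
import Mathlib

section
/- Let Γ ⊂ ℝⁿ (n ≥ 3) be an open, convex, symmetric cone with vertex at the origin satisfying Γₙ⁺ ⊆ Γ ⊆ Γ₁⁺, where Γₖ⁺ = {λ ∈ ℝⁿ : σⱼ(λ) > 0 for all 1 ≤ j ≤ k} and σⱼ is the j-th elementary symmetric polynomial. If there exists a nonzero λ ∈ ∂Γ₁⁺ ∩ Γ̄ (i.e. σ₁(λ) = 0 and λ ∈ Γ̄), then Γ = Γ₁⁺. -/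
/-!
The closure `C` of `Γ` is a convex cone invariant under permutations of coordinates. The cyclic
shifts of a vector with coordinate sum zero add up to `0`, so such a vector of `C` also has its
negative in `C`: it lies in the lineality space of `C`. Since `λ ≠ 0` has sum zero it is not
constant, so after a permutation `λ a ≠ λ b`, and `λ - λ ∘ (a b)` is a nonzero multiple of
`e_a - e_b`. Hence all `e_a - e_b`, and with them the whole hyperplane `σ₁ = 0`, lie in `C`.
Finally `y ∈ Γ₁⁺` is `(σ₁(y) / n, …, σ₁(y) / n) + h` with `h` in that hyperplane; the first term
is in `Γₙ⁺ ⊆ Γ`, and `Γ + C ⊆ Γ` because `Γ` is an open convex cone.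
-/

open Finset

/-- The `k`-th elementary symmetric polynomial of `x : Fin n → ℝ`. -/
noncomputable def esymm (n k : ℕ) (x : Fin n → ℝ) : ℝ :=
  ∑ s ∈ Finset.powersetCard k (Finset.univ : Finset (Fin n)), ∏ i ∈ s, x i

/-- The Gårding cone `Γₖ⁺ = {λ : σⱼ(λ) > 0 for all 1 ≤ j ≤ k}`. -/
def GammaK (n k : ℕ) : Set (Fin n → ℝ) :=
  {x | ∀ j, 1 ≤ j → j ≤ k → 0 < esymm n j x}

lemma esymm_one (n : ℕ) (x : Fin n → ℝ) : esymm n 1 x = ∑ i, x i := by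
  simp [esymm, powersetCard_one, sum_map]

lemma esymm_const (n k : ℕ) (a : ℝ) : esymm n k (fun _ => a) = n.choose k * a ^ k := by
  rw [esymm, sum_congr rfl fun s hs => by rw [prod_const, (mem_powersetCard.mp hs).2],
    sum_const, card_powersetCard, card_univ, Fintype.card_fin, nsmul_eq_mul]

lemma const_mem_GammaK {n k : ℕ} {a : ℝ} (ha : 0 < a) (hk : k ≤ n) :
    (fun _ => a : Fin n → ℝ) ∈ GammaK n k := fun j _ hj => by
  rw [esymm_const]
  have : 0 < (n.choose j : ℝ) := by exact_mod_cast Nat.choose_pos (hj.trans hk)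
  positivity

namespace ConvexCone

variable {E : Type*} [AddCommGroup E] [Module ℝ E]

def ofConvex {Γ : Set E} (hconv : Convex ℝ Γ) (hcone : ∀ s : ℝ, 0 < s → ∀ x ∈ Γ, s • x ∈ Γ) :
    ConvexCone ℝ E where
  carrier := Γ
  smul_mem' s hs x hx := hcone s hs x hx
  add_mem' x hx y hy := by
    convert hcone 2 two_pos _ (hconv hx hy (by norm_num : (0 : ℝ) ≤ 1 / 2)
      (by norm_num : (0 : ℝ) ≤ 1 / 2) (by norm_num)) using 1
    module

variable [TopologicalSpace E] (K : ConvexCone ℝ E)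

lemma zero_mem_closure [ContinuousSMul ℝ E] (hK : (K : Set E).Nonempty) :
    (0 : E) ∈ closure (K : Set E) := by
  obtain ⟨x, hx⟩ := hK
  have : Filter.Tendsto (fun t : ℝ => t • x) (nhdsWithin 0 (Set.Ioi 0)) (nhds 0) :=
    ((continuous_id.smul continuous_const).tendsto' _ _ (zero_smul ℝ x)).mono_left
      nhdsWithin_le_nhds
  exact mem_closure_of_tendsto this (eventually_nhdsWithin_of_forall fun t ht => K.smul_mem ht hx)

lemma add_mem_of_mem_of_mem_closure [IsTopologicalAddGroup E] [ContinuousConstSMul ℝ E]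
    (hK : IsOpen (K : Set E)) {x y : E} (hx : x ∈ K) (hy : y ∈ closure (K : Set E)) :
    x + y ∈ K := by
  have hmid := K.convex.combo_interior_closure_mem_interior (by rwa [hK.interior_eq]) hy
    (by norm_num : (0 : ℝ) < 1 / 2) (by norm_num : (0 : ℝ) ≤ 1 / 2) (by norm_num)
  rw [hK.interior_eq] at hmid
  convert K.smul_mem two_pos hmid using 1
  module

end ConvexCone

section Permutations

variable {ι : Type*}

lemma exists_apply_ne_of_sum_eq_zero [Fintype ι] {x : ι → ℝ} (hx : x ≠ 0)
    (hsum : ∑ i, x i = 0) (a : ι) : ∃ c, x c ≠ x a := by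
  by_contra! h
  refine hx (funext fun i => ?_)
  have : Nonempty ι := ⟨a⟩
  have hcard : (Fintype.card ι : ℝ) ≠ 0 := by exact_mod_cast Fintype.card_ne_zero
  have hxa : (Fintype.card ι : ℝ) * x a = 0 := by simpa [h] using hsum
  simp [h, (mul_eq_zero.mp hxa).resolve_left hcard]

variable [DecidableEq ι]

lemma exists_perm_apply_ne {α : Type*} {x : ι → α} {a b c : ι} (hc : x c ≠ x a) (hab : a ≠ b) :
    ∃ σ : Equiv.Perm ι, x (σ a) ≠ x (σ b) := by
  by_cases h : x a = x b
  · refine ⟨Equiv.swap b c, ?_⟩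
    have hac : a ≠ c := fun h => hc (h ▸ rfl)
    rwa [Equiv.swap_apply_of_ne_of_ne hab hac, Equiv.swap_apply_left, ne_comm]
  · exact ⟨1, h⟩

lemma sub_comp_swap (x : ι → ℝ) (a b : ι) :
    x - x ∘ Equiv.swap a b = (x a - x b) • (Pi.single a 1 - Pi.single b 1) := by
  ext k
  rcases eq_or_ne k a with rfl | hka
  · rcases eq_or_ne k b with rfl | hkb <;> simp [*]
  · rcases eq_or_ne k b with rfl | hkb
    · simp [hka]
    · simp [hka, hkb, Equiv.swap_apply_of_ne_of_ne]

lemma Submodule.mem_of_sum_eq_zero [Fintype ι] [Nonempty ι] {L : Submodule ℝ (ι → ℝ)}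
    (hL : ∀ a b, Pi.single a 1 - Pi.single b 1 ∈ L) {w : ι → ℝ} (hw : ∑ i, w i = 0) : w ∈ L := by
  obtain ⟨b⟩ := ‹Nonempty ι›
  have : w = ∑ a, w a • (Pi.single a 1 - Pi.single b 1) := by
    simp only [smul_sub, sum_sub_distrib, ← sum_smul, hw, zero_smul, sub_zero]
    ext i; simp [Pi.single_apply]
  rw [this]
  exact L.sum_mem fun a _ => L.smul_mem _ (hL a b)

end Permutations

section Lineal

variable {n : ℕ} [NeZero n] {P : PointedCone ℝ (Fin n → ℝ)}
  (hP : ∀ σ : Equiv.Perm (Fin n), ∀ x ∈ P, x ∘ σ ∈ P)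
include hP

lemma mem_lineal_of_mem_of_sum_eq_zero {x : Fin n → ℝ} (hx : x ∈ P) (hsum : ∑ i, x i = 0) :
    x ∈ P.lineal := by
  have hshifts : ∑ m : Fin n, x ∘ Equiv.addRight m = 0 := by
    ext j
    simpa [Finset.sum_apply] using (Equiv.sum_comp (Equiv.addLeft j) x).trans hsum
  rw [← add_sum_erase _ _ (mem_univ 0)] at hshifts
  have hneg : -x = ∑ m ∈ univ.erase 0, x ∘ Equiv.addRight m :=
    neg_eq_of_add_eq_zero_right (by simpa using hshifts)
  exact PointedCone.mem_lineal.mpr ⟨hx, hneg ▸ P.sum_mem fun m _ => hP _ x hx⟩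

lemma single_sub_single_mem_lineal {x : Fin n → ℝ} (hx : x ∈ P) (hx0 : x ≠ 0)
    (hsum : ∑ i, x i = 0) (a b : Fin n) : Pi.single a 1 - Pi.single b 1 ∈ P.lineal := by
  rcases eq_or_ne a b with rfl | hab
  · simp
  obtain ⟨c, hc⟩ := exists_apply_ne_of_sum_eq_zero hx0 hsum a
  obtain ⟨σ, hσ⟩ := exists_perm_apply_ne hc hab
  have hmem : ∀ τ : Equiv.Perm (Fin n), x ∘ σ ∘ τ ∈ P.lineal := fun τ =>
    mem_lineal_of_mem_of_sum_eq_zero hP (hP τ _ (hP σ x hx))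
      ((Equiv.sum_comp τ (x ∘ σ)).trans ((Equiv.sum_comp σ x).trans hsum))
  have hdiff := P.lineal.sub_mem (hmem 1) (hmem (Equiv.swap a b))
  rw [Equiv.Perm.coe_one, Function.comp_id, ← Function.comp_assoc, sub_comp_swap] at hdiff
  exact (P.lineal.smul_mem_iff (sub_ne_zero.mpr hσ)).mp hdiff

lemma mem_lineal_of_sum_eq_zero {x : Fin n → ℝ} (hx : x ∈ P) (hx0 : x ≠ 0)
    (hsum : ∑ i, x i = 0) {w : Fin n → ℝ} (hw : ∑ i, w i = 0) : w ∈ P.lineal :=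
  Submodule.mem_of_sum_eq_zero (single_sub_single_mem_lineal hP hx hx0 hsum) hw

end Lineal

theorem stmt0_general (n : ℕ) (Γ : Set (Fin n → ℝ))
    (hopen : IsOpen Γ) (hconv : Convex ℝ Γ)
    (hsym : ∀ σ : Equiv.Perm (Fin n), ∀ x ∈ Γ, x ∘ σ ∈ Γ)
    (hcone : ∀ s : ℝ, 0 < s → ∀ x ∈ Γ, s • x ∈ Γ)
    (hlow : GammaK n n ⊆ Γ) (hup : Γ ⊆ GammaK n 1)
    (lam : Fin n → ℝ) (hne : lam ≠ 0)
    (hs1 : ∑ i, lam i = 0) (hcl : lam ∈ closure Γ) :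
    Γ = GammaK n 1 := by
  have : NeZero n := ⟨by rintro rfl; exact hne (Subsingleton.elim _ _)⟩
  let K := ConvexCone.ofConvex hconv hcone
  let C := K.closure.toPointedCone (K.zero_mem_closure (closure_nonempty_iff.mp ⟨lam, hcl⟩))
  have hC : ∀ σ : Equiv.Perm (Fin n), ∀ x ∈ C, x ∘ σ ∈ C :=
    fun σ _ hx => map_mem_closure (f := (· ∘ σ)) (by fun_prop) hx (hsym σ)
  have hsumzero : ∀ w : Fin n → ℝ, ∑ i, w i = 0 → w ∈ closure Γ := fun w hw =>
    C.lineal_le (mem_lineal_of_sum_eq_zero hC hcl hne hs1 hw)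
  refine hup.antisymm fun y hy => ?_
  have hS : 0 < ∑ i, y i := esymm_one n y ▸ hy 1 le_rfl le_rfl
  have hn : (0 : ℝ) < n := Nat.cast_pos.mpr (NeZero.pos n)
  set c := (∑ i, y i) / n
  have hc : (fun _ => c : Fin n → ℝ) ∈ Γ := hlow (const_mem_GammaK (div_pos hS hn) le_rfl)
  have hrest : ∑ i, (y - fun _ => c : Fin n → ℝ) i = 0 := by
    simp [sum_sub_distrib, c, mul_div_cancel₀ _ hn.ne']
  rw [← add_sub_cancel (fun _ => c) y]
  exact K.add_mem_of_mem_of_mem_closure hopen hc (hsumzero _ hrest)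

theorem stmt0 (n : ℕ) (hn : 3 ≤ n) (Γ : Set (Fin n → ℝ))
    (hopen : IsOpen Γ) (hconv : Convex ℝ Γ)
    (hsym : ∀ σ : Equiv.Perm (Fin n), ∀ x ∈ Γ, x ∘ σ ∈ Γ)
    (hcone : ∀ s : ℝ, 0 < s → ∀ x ∈ Γ, s • x ∈ Γ)
    (hlow : GammaK n n ⊆ Γ) (hup : Γ ⊆ GammaK n 1)
    (lam : Fin n → ℝ) (hne : lam ≠ 0)
    (hs1 : ∑ i, lam i = 0) (hcl : lam ∈ closure Γ) :
    Γ = GammaK n 1 :=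
  stmt0_general n Γ hopen hconv hsym hcone hlow hup lam hne hs1 hcl
end

section
/- Let Γ ⊂ ℝⁿ be an open, convex, symmetric cone with vertex at the origin, Γₙ⁺ ⊆ Γ ⊆ Γ₁⁺, with (1,0,…,0) ∈ Γ. Then for all τ' > 1 sufficiently close to 1, the set Γ^{τ'} = {λ : τ'λ + (1−τ')σ₁(λ)e ∈ Γ} is again an open, convex, symmetric cone with vertex at the origin satisfying Γₙ⁺ ⊆ Γ^{τ'} ⊆ Γ₁⁺. -/
open Finset

/-- The transformation `λ ↦ λ^τ = τλ + (1-τ)σ₁(λ)e`. -/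
def lamT (n : ℕ) (τ : ℝ) (x : Fin n → ℝ) : Fin n → ℝ :=
  fun i => τ * x i + (1 - τ) * ∑ j, x j

lemma esymm_zero (n : ℕ) (x : Fin n → ℝ) : esymm n 0 x = 1 := by
  simp [esymm]

lemma prod_eq_sum_esymm (n : ℕ) (x : Fin n → ℝ) (t : ℝ) :
    ∏ i, (x i + t) = ∑ k ∈ range (n + 1), esymm n k x * t ^ (n - k) := by
  rw [Finset.prod_add]
  rw [Finset.sum_powerset (univ : Finset (Fin n)) (fun s => (∏ i ∈ s, x i) * ∏ i ∈ univ \ s, t)]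
  rw [Finset.card_univ, Fintype.card_fin]
  refine Finset.sum_congr rfl fun k hk => ?_
  rw [esymm, Finset.sum_mul]
  refine Finset.sum_congr rfl fun s hs => ?_
  rw [Finset.prod_const]
  congr 1
  rw [Finset.card_sdiff_of_subset (Finset.subset_univ s), Finset.card_univ, Fintype.card_fin,
    (Finset.mem_powersetCard.1 hs).2]

lemma gammaN_pos (n : ℕ) (hn : 1 ≤ n) (x : Fin n → ℝ) (hx : x ∈ GammaK n n) (i : Fin n) :
    0 < x i := by
  by_contra h
  push_neg at h
  have ht : (0:ℝ) ≤ -x i := by linarith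
  have hzero : ∏ j, (x j + (-x i)) = 0 :=
    Finset.prod_eq_zero (Finset.mem_univ i) (by ring)
  have hpos : 0 < ∑ k ∈ range (n + 1), esymm n k x * (-x i) ^ (n - k) := by
    apply Finset.sum_pos'
    · intro k hk
      rcases Nat.eq_zero_or_pos k with rfl | hk1
      · rw [esymm_zero]; positivity
      · have := hx k hk1 (Nat.lt_succ_iff.1 (Finset.mem_range.1 hk))
        positivity
    · refine ⟨n, Finset.self_mem_range_succ n, ?_⟩
      have := hx n hn le_rfl
      simp [this]
  rw [prod_eq_sum_esymm] at hzero
  linarith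

/-- `lamT` as a linear map. -/
noncomputable def lamTL (n : ℕ) (τ : ℝ) : (Fin n → ℝ) →ₗ[ℝ] (Fin n → ℝ) where
  toFun := lamT n τ
  map_add' x y := by
    funext i
    simp only [lamT, Pi.add_apply, Finset.sum_add_distrib]
    ring
  map_smul' c x := by
    funext i
    simp only [lamT, Pi.smul_apply, smul_eq_mul, RingHom.id_apply, ← Finset.mul_sum]
    ring

lemma lamT_comp_perm (n : ℕ) (τ : ℝ) (x : Fin n → ℝ) (σ : Equiv.Perm (Fin n)) :
    lamT n τ (x ∘ σ) = lamT n τ x ∘ σ := by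
  funext i
  simp only [lamT, Function.comp_apply, Equiv.sum_comp σ x]

lemma lamT_one (n : ℕ) (x : Fin n → ℝ) : lamT n 1 x = x := by
  funext i; simp [lamT]

lemma lamT_cont (n : ℕ) (x : Fin n → ℝ) : Continuous (fun τ => lamT n τ x) := by
  apply continuous_pi
  intro i
  simp only [lamT]
  fun_prop

lemma single_comp_swap (n : ℕ) (i0 i : Fin n) :
    (Pi.single i0 (1:ℝ)) ∘ (Equiv.swap i0 i) = Pi.single i (1:ℝ) := by
  funext j
  rcases eq_or_ne j i with rfl | hj
  · simp [Equiv.swap_apply_right, Pi.single_apply]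
  · rcases eq_or_ne j i0 with rfl | hj0
    · simp [Equiv.swap_apply_left, Pi.single_apply, hj, (Ne.symm hj)]
    · simp [Equiv.swap_apply_of_ne_of_ne hj0 hj, Pi.single_apply, hj0, hj, Ne.symm hj0]

theorem stmt14 (n : ℕ) (hn : 3 ≤ n) (Γ : Set (Fin n → ℝ))
    (hopen : IsOpen Γ) (hconv : Convex ℝ Γ)
    (hsym : ∀ σ : Equiv.Perm (Fin n), ∀ x ∈ Γ, x ∘ σ ∈ Γ)
    (hcone : ∀ s : ℝ, 0 < s → ∀ x ∈ Γ, s • x ∈ Γ)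
    (hlow : GammaK n n ⊆ Γ) (hup : Γ ⊆ GammaK n 1)
    (he1 : Pi.single (⟨0, by omega⟩ : Fin n) (1 : ℝ) ∈ Γ) :
    ∃ ε > (0 : ℝ), ∀ τ' : ℝ, 1 < τ' → τ' < 1 + ε →
      IsOpen {x | lamT n τ' x ∈ Γ} ∧ Convex ℝ {x | lamT n τ' x ∈ Γ} ∧
      (∀ σ : Equiv.Perm (Fin n), ∀ x ∈ {x | lamT n τ' x ∈ Γ}, x ∘ σ ∈ {x | lamT n τ' x ∈ Γ}) ∧
      (∀ s : ℝ, 0 < s → ∀ x ∈ {x | lamT n τ' x ∈ Γ}, s • x ∈ {x | lamT n τ' x ∈ Γ}) ∧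
      GammaK n n ⊆ {x | lamT n τ' x ∈ Γ} ∧ {x | lamT n τ' x ∈ Γ} ⊆ GammaK n 1 := by
  have hn3 : (3:ℝ) ≤ (n:ℝ) := by exact_mod_cast hn
  set i0 : Fin n := ⟨0, by omega⟩ with hi0
  -- find ε₀ from openness
  have hcont : Continuous (fun τ => lamT n τ (Pi.single i0 (1:ℝ))) := lamT_cont n _
  have h1mem : (1:ℝ) ∈ (fun τ => lamT n τ (Pi.single i0 (1:ℝ))) ⁻¹' Γ := by
    simp only [Set.mem_preimage, lamT_one]
    exact he1
  obtain ⟨ε₀, hε₀pos, hball⟩ :=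
    Metric.isOpen_iff.1 (hopen.preimage hcont) 1 h1mem
  have hinv : (0:ℝ) < 1 / ((n:ℝ) - 1) := by
    apply div_pos one_pos; linarith
  refine ⟨min ε₀ (1 / ((n:ℝ) - 1)), lt_min hε₀pos hinv, ?_⟩
  intro τ' hτ1 hτ2
  have hτε₀ : τ' < 1 + ε₀ := lt_of_lt_of_le hτ2 (by gcongr; exact min_le_left _ _)
  have hτn : τ' < 1 + 1 / ((n:ℝ) - 1) := lt_of_lt_of_le hτ2 (by gcongr; exact min_le_right _ _)
  have hkey : lamT n τ' (Pi.single i0 (1:ℝ)) ∈ Γ := by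
    apply hball
    rw [Metric.mem_ball, Real.dist_eq, abs_of_pos (by linarith)]
    linarith
  have hLcont : Continuous (lamT n τ') := (lamTL n τ').continuous_of_finiteDimensional
  refine ⟨hopen.preimage hLcont, hconv.linear_preimage (lamTL n τ'), ?_, ?_, ?_, ?_⟩
  · intro σ x hx
    show lamT n τ' (x ∘ σ) ∈ Γ
    rw [lamT_comp_perm]
    exact hsym σ _ hx
  · intro s hs x hx
    show lamT n τ' (s • x) ∈ Γ
    have : lamT n τ' (s • x) = s • lamT n τ' x := (lamTL n τ').map_smul s x
    rw [this]
    exact hcone s hs _ hx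
  · -- GammaK n n ⊆
    intro x hx
    have hpos : ∀ i, 0 < x i := gammaN_pos n (by omega) x hx
    have hxeq : x = ∑ i, x i • (Pi.single i (1:ℝ) : Fin n → ℝ) := by
      funext j
      rw [Finset.sum_apply]
      simp [Pi.single_apply]
    set v : Fin n → (Fin n → ℝ) := fun i => lamT n τ' (Pi.single i (1:ℝ)) with hv
    have hvΓ : ∀ i, v i ∈ Γ := by
      intro i
      have : v i = lamT n τ' (Pi.single i0 (1:ℝ)) ∘ (Equiv.swap i0 i) := by
        rw [hv, ← lamT_comp_perm, single_comp_swap]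
      rw [this]
      exact hsym _ _ hkey
    have hmap : lamT n τ' x = ∑ i, x i • v i := by
      conv_lhs => rw [hxeq]
      rw [show lamT n τ' (∑ i, x i • (Pi.single i (1:ℝ) : Fin n → ℝ))
          = lamTL n τ' (∑ i, x i • (Pi.single i (1:ℝ) : Fin n → ℝ)) from rfl]
      rw [map_sum]
      simp only [map_smul]
      rfl
    set S : ℝ := ∑ i, x i with hS
    have hSpos : 0 < S := Finset.sum_pos (fun i _ => hpos i) ⟨i0, Finset.mem_univ i0⟩
    have hy : (∑ i, (x i / S) • v i) ∈ Γ := by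
      apply hconv.sum_mem
      · intro i _; exact div_nonneg (hpos i).le hSpos.le
      · rw [← Finset.sum_div, ← hS, div_self hSpos.ne']
      · intro i _; exact hvΓ i
    have := hcone S hSpos _ hy
    show lamT n τ' x ∈ Γ
    rw [hmap]
    convert this using 1
    rw [Finset.smul_sum]
    refine Finset.sum_congr rfl fun i _ => ?_
    rw [smul_smul, mul_comm, div_mul_cancel₀ _ hSpos.ne']
  · -- ⊆ GammaK n 1
    intro x hx j hj1 hj2
    have hj : j = 1 := le_antisymm hj2 hj1
    subst hj
    have hσ := hup hx 1 le_rfl le_rfl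
    rw [esymm_one] at hσ ⊢
    have heq : ∑ i, lamT n τ' x i = (τ' + (1 - τ') * n) * (∑ i, x i) := by
      simp only [lamT, Finset.sum_add_distrib, ← Finset.mul_sum, Finset.sum_const,
        Finset.card_univ, Fintype.card_fin, nsmul_eq_mul]
      ring
    rw [heq] at hσ
    have h2 : (τ' - 1) * ((n:ℝ) - 1) < 1 := by
      rw [← lt_div_iff₀ (by linarith : (0:ℝ) < (n:ℝ) - 1)]
      linarith
    have hc : 0 < τ' + (1 - τ') * (n:ℝ) := by nlinarith [h2]
    by_contra h
    push_neg at h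
    nlinarith
end
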